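/- arXiv:2309.11347 — 6 statements merged into one kernel-verified Lean document; each statement's English description precedes it below -/
import Mathlib

section
/- Let S be a Tychonoff pseudocompact right topological monoid, X a Tychonoff pseudocompact space, and π : S × X → X a separately continuous action such that π(1, x) = x for every x ∈ X. Suppose π extends to a separately continuous function π̃ : βS × βX → βX, where β denotes the Stone–Čech compactification. Then π is jointly continuous at every point of {1} × X. -/
open Filter Topology Set

/-- A space is pseudocompact if every continuous real-valued function on it is bounded. -/
def IsPseudocompact (X : Type*) [TopologicalSpace X] : Prop :=
  ∀ f : X → ℝ, Continuous f → ∃ M : ℝ, ∀ x : X, |f x| ≤ M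

/-- A function is quasicontinuous. -/
def QuasiContinuous {X Y : Type*} [TopologicalSpace X] [TopologicalSpace Y] (f : X → Y) : Prop :=
  ∀ x : X, ∀ V : Set Y, IsOpen V → f x ∈ V → ∀ U : Set X, IsOpen U → x ∈ U →
    ∃ W : Set X, IsOpen W ∧ W.Nonempty ∧ W ⊆ U ∧ f '' W ⊆ V

/-- Separate continuity of a function of two variables. -/
def SeparatelyContinuous {X Y Z : Type*} [TopologicalSpace X] [TopologicalSpace Y]
    [TopologicalSpace Z] (f : X × Y → Z) : Prop :=
  (∀ x : X, Continuous fun y : Y => f (x, y)) ∧ (∀ y : Y, Continuous fun x : X => f (x, y))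

/-- The space of continuous real-valued functions with the topology of pointwise
convergence, realized as a subspace of the product `Y → ℝ`. -/
def Cp (Y : Type*) [TopologicalSpace Y] : Type _ := {g : Y → ℝ // Continuous g}

noncomputable instance (Y : Type*) [TopologicalSpace Y] : TopologicalSpace (Cp Y) :=
  instTopologicalSpaceSubtype

/-- `(X, Y)` is a Grothendieck pair if every continuous image of `X` in `C_p(Y)`
has compact closure in `C_p(Y)`. -/
def GrothendieckPair (X Y : Type*) [TopologicalSpace X] [TopologicalSpace Y] : Prop :=
  ∀ F : X → Cp Y, Continuous F → IsCompact (closure (Set.range F))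

/-- `x` is a weak q-point relative to `A`. -/
def IsWeakQPoint {X : Type*} [TopologicalSpace X] (x : X) (A : Set X) : Prop :=
  ∃ φ : List (Set X) → Set X,
    (∀ l : List (Set X), (∀ U ∈ l, IsOpen U ∧ x ∈ U) →
      φ l ⊆ A ∧ ∃ T : Set X, T.Countable ∧ φ l ⊆ closure T) ∧
    (∀ U : ℕ → Set X, (∀ i : ℕ, IsOpen (U i) ∧ x ∈ U i) →
      (closure (⋃ i : ℕ, φ ((List.range (i + 1)).map U)) ∩ ⋂ i : ℕ, U i).Nonempty)

/-- A weak `q_D`-space. -/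
def IsWeakQDSpace (X : Type*) [TopologicalSpace X] : Prop :=
  ∃ D : Set X, Dense D ∧ ∀ A : Set X, A ⊆ D → ¬ IsClosed A → ∃ x : X, IsWeakQPoint x A

/-! ### Auxiliary lemmas -/

/-- In a pseudocompact Tychonoff space, a decreasing sequence of nonempty open sets
has a point in the intersection of the closures (feeble compactness). -/
lemma IsPseudocompact.iInter_closure_nonempty {S : Type*} [TopologicalSpace S] [T35Space S]
    (hS : IsPseudocompact S) (U : ℕ → Set S)
    (hop : ∀ n, IsOpen (U n)) (hne : ∀ n, (U n).Nonempty)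
    (hdec : ∀ n, U (n + 1) ⊆ U n) :
    (⋂ n, closure (U n)).Nonempty := by
  by_contra hempty
  rw [Set.not_nonempty_iff_eq_empty] at hempty
  choose p hp using hne
  have hcr : ∀ n, ∃ f : S → unitInterval,
      Continuous f ∧ f (p n) = 0 ∧ Set.EqOn f 1 (U n)ᶜ := fun n =>
    CompletelyRegularSpace.completely_regular (p n) (U n)ᶜ (hop n).isClosed_compl
      (by simp [hp n])
  choose f hfc hfp hfK using hcr
  set g : ℕ → S → ℝ := fun n s => (n : ℝ) * (1 - (f n s : ℝ)) with hg
  have hg0 : ∀ n s, s ∉ U n → g n s = 0 := by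
    intro n s hs
    have h1 : f n s = 1 := hfK n hs
    simp [hg, h1]
  have hgnn : ∀ n s, 0 ≤ g n s := fun n s =>
    mul_nonneg (Nat.cast_nonneg n) (by have := unitInterval.le_one (f n s); linarith)
  have hgc : ∀ n, Continuous (g n) := fun n =>
    continuous_const.mul (continuous_const.sub (continuous_subtype_val.comp (hfc n)))
  have hmono : ∀ n m, n ≤ m → U m ⊆ U n := by
    intro n m hnm
    induction hnm with
    | refl => exact subset_rfl
    | step _ ih => exact (hdec _).trans ih
  have hhor : ∀ s : S, ∃ N, s ∉ closure (U N) := by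
    intro s
    by_contra hc
    push_neg at hc
    have : s ∈ ⋂ n, closure (U n) := Set.mem_iInter.mpr hc
    rw [hempty] at this
    exact this
  have hzero : ∀ N m, N ≤ m → ∀ t, t ∉ closure (U N) → g m t = 0 := by
    intro N m hNm t ht
    exact hg0 m t fun htm => ht (subset_closure (hmono N m hNm htm))
  have hsum : ∀ s : S, Summable fun n => g n s := by
    intro s
    obtain ⟨N, hN⟩ := hhor s
    refine summable_of_ne_finset_zero (s := Finset.range N) ?_
    intro m hm
    rw [Finset.mem_range, not_lt] at hm
    exact hzero N m hm s hN
  set F : S → ℝ := fun s => ∑' n, g n s with hF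
  have hFc : Continuous F := by
    rw [continuous_iff_continuousAt]
    intro s
    obtain ⟨N, hN⟩ := hhor s
    have hfin : ContinuousAt (fun t => ∑ n ∈ Finset.range N, g n t) s :=
      (continuous_finset_sum _ fun n _ => hgc n).continuousAt
    refine hfin.congr ?_
    have hO : (closure (U N))ᶜ ∈ 𝓝 s := (isClosed_closure.isOpen_compl).mem_nhds hN
    filter_upwards [hO] with t ht
    refine (tsum_eq_sum ?_).symm
    intro m hm
    rw [Finset.mem_range, not_lt] at hm
    exact hzero N m hm t ht
  obtain ⟨M, hM⟩ := hS F hFc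
  obtain ⟨n, hn⟩ := exists_nat_gt M
  have h1 : g n (p n) ≤ F (p n) := Summable.le_tsum (hsum (p n)) n fun j _ => hgnn j (p n)
  have h2 : g n (p n) = n := by simp [hg, hfp n]
  have h3 : F (p n) ≤ M := (le_abs_self _).trans (hM (p n))
  rw [h2] at h1
  linarith

/-- The central oscillation claim: a separately continuous real-valued function of two
variables which factors (through maps into compact spaces) via a separately continuous
function has, inside any nonempty open set and for any `ε > 0`, a nonempty open box
around a fixed second coordinate `x₀` on which it oscillates by at most `ε`. -/
lemma osc_claim {S X K L : Type*} [TopologicalSpace S] [TopologicalSpace X]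
    [TopologicalSpace K] [TopologicalSpace L] [CompactSpace K] [CompactSpace L]
    (G : S → X → ℝ) (hG1 : ∀ s, Continuous (G s)) (hG2 : ∀ x, Continuous fun s => G s x)
    (hGrange : ∀ s x, G s x ∈ Set.Icc (0 : ℝ) 1)
    (Φ : K → L → ℝ) (hΦ1 : ∀ k, Continuous (Φ k)) (hΦ2 : ∀ l, Continuous fun k => Φ k l)
    (i : S → K) (j : X → L) (hij : ∀ s x, Φ (i s) (j x) = G s x)
    (x₀ : X) (U : Set S) (hUo : IsOpen U) (hUne : U.Nonempty) (ε : ℝ) (hε : 0 < ε) :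
    ∃ U' W, IsOpen U' ∧ U'.Nonempty ∧ U' ⊆ U ∧ IsOpen W ∧ x₀ ∈ W ∧
      ∀ s ∈ U', ∀ x ∈ W, ∀ s' ∈ U', ∀ x' ∈ W, |G s x - G s' x'| ≤ ε := by
  by_contra hcon
  push_neg at hcon
  obtain ⟨t₀, ht₀⟩ := hUne
  set ε₁ : ℝ := 3 * ε / 8 with hε₁def
  have hε₁ : 0 < ε₁ := by positivity
  set U₁ : Set S := U ∩ {s | |G s x₀ - G t₀ x₀| < ε / 8} with hU₁def
  have hU₁o : IsOpen U₁ := hUo.inter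
    (isOpen_lt (continuous_abs.comp ((hG2 x₀).sub continuous_const)) continuous_const)
  have ht₀1 : t₀ ∈ U₁ := ⟨ht₀, by
    simp only [Set.mem_setOf_eq, sub_self, abs_zero]
    positivity⟩
  have hU₁sub : U₁ ⊆ U := Set.inter_subset_left
  have hcon1 : ∀ U' W, IsOpen U' → U'.Nonempty → U' ⊆ U₁ → IsOpen W → x₀ ∈ W →
      ∃ s ∈ U', ∃ x ∈ W, ε₁ < |G s x - G s x₀| := by
    intro U' W hU'o hU'ne hU'sub hWo hx₀W
    obtain ⟨s, hs, x, hx, s', hs', x', hx', hgt⟩ :=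
      hcon U' W hU'o hU'ne (hU'sub.trans hU₁sub) hWo hx₀W
    have hsA : |G s x₀ - G t₀ x₀| < ε / 8 := (hU'sub hs).2
    have hs'A : |G s' x₀ - G t₀ x₀| < ε / 8 := (hU'sub hs').2
    by_contra hno
    push_neg at hno
    have e1 : |G s x - G s x₀| ≤ ε₁ := hno s hs x hx
    have e2 : |G s' x' - G s' x₀| ≤ ε₁ := hno s' hs' x' hx'
    have t1 : |G s x - G s' x'| ≤
        |G s x - G s x₀| + |G s x₀ - G s' x₀| + |G s' x₀ - G s' x'| := by
      calc |G s x - G s' x'| ≤ |G s x - G s' x₀| + |G s' x₀ - G s' x'| := abs_sub_le _ _ _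
        _ ≤ |G s x - G s x₀| + |G s x₀ - G s' x₀| + |G s' x₀ - G s' x'| := by
            gcongr
            exact abs_sub_le _ _ _
    have t2 : |G s x₀ - G s' x₀| ≤ |G s x₀ - G t₀ x₀| + |G t₀ x₀ - G s' x₀| := abs_sub_le _ _ _
    rw [abs_sub_comm (G s' x₀) (G s' x')] at t1
    rw [abs_sub_comm (G t₀ x₀) (G s' x₀)] at t2
    rw [hε₁def] at e1 e2
    linarith
  -- recursive construction of sequences
  set δ : ℝ := ε₁ / 4 with hδdef
  have hδ : 0 < δ := by positivity
  let St := {UW : Set S × Set X //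
    IsOpen UW.1 ∧ UW.1.Nonempty ∧ UW.1 ⊆ U₁ ∧ IsOpen UW.2 ∧ x₀ ∈ UW.2}
  have step : ∀ st : St, ∃ sx : S × X, sx.1 ∈ st.1.1 ∧ sx.2 ∈ st.1.2 ∧
      ε₁ < |G sx.1 sx.2 - G sx.1 x₀| := by
    rintro ⟨⟨U', W⟩, hU'o, hU'ne, hU'sub, hWo, hx₀W⟩
    obtain ⟨s, hs, x, hx, h⟩ := hcon1 U' W hU'o hU'ne hU'sub hWo hx₀W
    exact ⟨(s, x), hs, hx, h⟩
  choose pick hpick1 hpick2 hpick3 using step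
  let next : St → St := fun st =>
    ⟨(st.1.1 ∩ {t | |G t (pick st).2 - G (pick st).1 (pick st).2| < δ},
      st.1.2 ∩ {w | |G (pick st).1 w - G (pick st).1 x₀| < δ}),
      st.2.1.inter
        (isOpen_lt (continuous_abs.comp ((hG2 _).sub continuous_const)) continuous_const),
      ⟨(pick st).1, hpick1 st, by simp [hδ]⟩,
      Set.inter_subset_left.trans st.2.2.2.1,
      st.2.2.2.2.1.inter
        (isOpen_lt (continuous_abs.comp ((hG1 _).sub continuous_const)) continuous_const),
      ⟨st.2.2.2.2.2, by simp [hδ]⟩⟩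
  let seq : ℕ → St := fun n =>
    Nat.rec (motive := fun _ => St)
      ⟨(U₁, Set.univ), hU₁o, ⟨t₀, ht₀1⟩, subset_rfl, isOpen_univ, Set.mem_univ x₀⟩
      (fun _ st => next st) n
  let s : ℕ → S := fun n => (pick (seq n)).1
  let x : ℕ → X := fun n => (pick (seq n)).2
  have hseqU : ∀ n, (seq (n + 1)).1.1 =
      (seq n).1.1 ∩ {t | |G t (x n) - G (s n) (x n)| < δ} := fun n => rfl
  have hseqW : ∀ n, (seq (n + 1)).1.2 =
      (seq n).1.2 ∩ {w | |G (s n) w - G (s n) x₀| < δ} := fun n => rfl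
  have hUmono : ∀ n m, n ≤ m → (seq m).1.1 ⊆ (seq n).1.1 := by
    intro n m hnm
    induction hnm with
    | refl => exact subset_rfl
    | step _ ih =>
        refine subset_trans ?_ ih
        rw [hseqU]
        exact Set.inter_subset_left
  have hWmono : ∀ n m, n ≤ m → (seq m).1.2 ⊆ (seq n).1.2 := by
    intro n m hnm
    induction hnm with
    | refl => exact subset_rfl
    | step _ ih =>
        refine subset_trans ?_ ih
        rw [hseqW]
        exact Set.inter_subset_left
  have hsmem : ∀ n, s n ∈ (seq n).1.1 := fun n => hpick1 (seq n)
  have hxmem : ∀ n, x n ∈ (seq n).1.2 := fun n => hpick2 (seq n)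
  have hkey1 : ∀ n m, n < m → |G (s m) (x n) - G (s n) (x n)| < δ := by
    intro n m hnm
    have h1 : s m ∈ (seq (n + 1)).1.1 := hUmono (n + 1) m hnm (hsmem m)
    rw [hseqU] at h1
    exact h1.2
  have hkey2 : ∀ n m, n < m → |G (s n) (x m) - G (s n) x₀| < δ := by
    intro n m hnm
    have h1 : x m ∈ (seq (n + 1)).1.2 := hWmono (n + 1) m hnm (hxmem m)
    rw [hseqW] at h1
    exact h1.2
  have hbad : ∀ n, ε₁ < |G (s n) (x n) - G (s n) x₀| := fun n => hpick3 (seq n)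
  -- ultrafilter limits
  let 𝒰 : Ultrafilter ℕ := Ultrafilter.of Filter.atTop
  have h𝒰 : (𝒰 : Filter ℕ) ≤ Filter.atTop := Ultrafilter.of_le _
  have hgt : ∀ n, {m | n < m} ∈ (𝒰 : Filter ℕ) := fun n => h𝒰 (Filter.eventually_gt_atTop n)
  obtain ⟨P, -, hP⟩ := isCompact_univ.ultrafilter_le_nhds (𝒰.map fun n => i (s n))
    (by rw [le_principal_iff]; exact Filter.univ_mem)
  rw [Ultrafilter.coe_map] at hP
  have hP' : Tendsto (fun n => i (s n)) (𝒰 : Filter ℕ) (𝓝 P) := hP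
  obtain ⟨y, -, hy⟩ := isCompact_univ.ultrafilter_le_nhds (𝒰.map fun n => j (x n))
    (by rw [le_principal_iff]; exact Filter.univ_mem)
  rw [Ultrafilter.coe_map] at hy
  have hy' : Tendsto (fun n => j (x n)) (𝒰 : Filter ℕ) (𝓝 y) := hy
  have hcompl : ∀ F : ℕ → ℝ, (∀ n, F n ∈ Set.Icc (0 : ℝ) 1) →
      ∃ a, Tendsto F (𝒰 : Filter ℕ) (𝓝 a) := by
    intro F hF
    obtain ⟨a, -, ha⟩ := (isCompact_Icc (a := (0:ℝ)) (b := 1)).ultrafilter_le_nhds (𝒰.map F)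
      (by
        rw [le_principal_iff]
        exact Filter.mem_map.mpr (Filter.univ_mem' fun n => hF n))
    rw [Ultrafilter.coe_map] at ha
    exact ⟨a, ha⟩
  obtain ⟨L₀, hL₀⟩ := hcompl (fun n => G (s n) x₀) fun n => hGrange _ _
  obtain ⟨A, hA⟩ := hcompl (fun n => G (s n) (x n)) fun n => hGrange _ _
  have hΔcl : IsClosed {r : ℝ | |r| ≤ δ} := isClosed_le continuous_abs continuous_const
  have e1 : ∀ n, |Φ (i (s n)) y - G (s n) x₀| ≤ δ := by
    intro n
    have ht0 : Tendsto (fun m => Φ (i (s n)) (j (x m))) (𝒰 : Filter ℕ) (𝓝 (Φ (i (s n)) y)) :=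
      ((hΦ1 (i (s n))).tendsto y).comp hy'
    have ht : Tendsto (fun m => G (s n) (x m) - G (s n) x₀) (𝒰 : Filter ℕ)
        (𝓝 (Φ (i (s n)) y - G (s n) x₀)) :=
      (ht0.congr fun m => hij (s n) (x m)).sub_const _
    refine hΔcl.mem_of_tendsto ht ?_
    filter_upwards [hgt n] with m hm
    exact (hkey2 n m hm).le
  have e2 : |Φ P y - L₀| ≤ δ := by
    have ht : Tendsto (fun n => Φ (i (s n)) y - G (s n) x₀) (𝒰 : Filter ℕ)
        (𝓝 (Φ P y - L₀)) := (((hΦ2 y).tendsto P).comp hP').sub hL₀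
    exact hΔcl.mem_of_tendsto ht (Filter.Eventually.of_forall e1)
  have e3 : ∀ n, |Φ P (j (x n)) - G (s n) (x n)| ≤ δ := by
    intro n
    have ht0 : Tendsto (fun m => Φ (i (s m)) (j (x n))) (𝒰 : Filter ℕ) (𝓝 (Φ P (j (x n)))) :=
      ((hΦ2 (j (x n))).tendsto P).comp hP'
    have ht : Tendsto (fun m => G (s m) (x n) - G (s n) (x n)) (𝒰 : Filter ℕ)
        (𝓝 (Φ P (j (x n)) - G (s n) (x n))) :=
      (ht0.congr fun m => hij (s m) (x n)).sub_const _
    refine hΔcl.mem_of_tendsto ht ?_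
    filter_upwards [hgt n] with m hm
    exact (hkey1 n m hm).le
  have e4 : |Φ P y - A| ≤ δ := by
    have ht : Tendsto (fun n => Φ P (j (x n)) - G (s n) (x n)) (𝒰 : Filter ℕ)
        (𝓝 (Φ P y - A)) := (((hΦ1 P).tendsto y).comp hy').sub hA
    exact hΔcl.mem_of_tendsto ht (Filter.Eventually.of_forall e3)
  have e5 : ε₁ ≤ |A - L₀| := by
    have hd : Tendsto (fun n => G (s n) (x n) - G (s n) x₀) (𝒰 : Filter ℕ)
        (𝓝 (A - L₀)) := hA.sub hL₀
    rcases 𝒰.mem_or_compl_mem {n | ε₁ ≤ G (s n) (x n) - G (s n) x₀} with hE | hE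
    · have hcl : IsClosed {r : ℝ | ε₁ ≤ r} := isClosed_le continuous_const continuous_id
      have h6 : ε₁ ≤ A - L₀ := hcl.mem_of_tendsto hd hE
      exact h6.trans (le_abs_self _)
    · have hsub : {n | ε₁ ≤ G (s n) (x n) - G (s n) x₀}ᶜ ⊆
          {n | G (s n) (x n) - G (s n) x₀ ≤ -ε₁} := by
        intro n hn
        simp only [Set.mem_compl_iff, Set.mem_setOf_eq, not_le] at hn
        have hb := hbad n
        rcases abs_cases (G (s n) (x n) - G (s n) x₀) with ⟨heq, -⟩ | ⟨heq, -⟩ <;>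
          simp only [Set.mem_setOf_eq] <;> linarith
      have hcl : IsClosed {r : ℝ | r ≤ -ε₁} := isClosed_le continuous_id continuous_const
      have h6 : A - L₀ ≤ -ε₁ := hcl.mem_of_tendsto hd (Filter.mem_of_superset hE hsub)
      calc ε₁ ≤ -(A - L₀) := by linarith
        _ ≤ |A - L₀| := neg_le_abs _
  have tri : |A - L₀| ≤ |Φ P y - A| + |Φ P y - L₀| := by
    have h7 := abs_sub_le A (Φ P y) L₀
    rwa [abs_sub_comm A (Φ P y)] at h7
  rw [hδdef] at e2 e4
  linarith

/-- Dense set of points of joint continuity (with the second coordinate fixed at `x₀`). -/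
lemma dense_joint_continuity {S X K L : Type*} [TopologicalSpace S] [TopologicalSpace X]
    [T35Space S] [TopologicalSpace K] [TopologicalSpace L] [CompactSpace K] [CompactSpace L]
    (hS : IsPseudocompact S)
    (G : S → X → ℝ) (hG1 : ∀ s, Continuous (G s)) (hG2 : ∀ x, Continuous fun s => G s x)
    (hGrange : ∀ s x, G s x ∈ Set.Icc (0 : ℝ) 1)
    (Φ : K → L → ℝ) (hΦ1 : ∀ k, Continuous (Φ k)) (hΦ2 : ∀ l, Continuous fun k => Φ k l)
    (i : S → K) (j : X → L) (hij : ∀ s x, Φ (i s) (j x) = G s x)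
    (x₀ : X) (U₀ : Set S) (hU₀o : IsOpen U₀) (hU₀ne : U₀.Nonempty) :
    ∃ d ∈ U₀, ContinuousAt (fun q : S × X => G q.1 q.2) (d, x₀) := by
  let St := {UW : Set S × Set X //
    IsOpen UW.1 ∧ UW.1.Nonempty ∧ IsOpen UW.2 ∧ x₀ ∈ UW.2}
  have step : ∀ n : ℕ, ∀ st : St, ∃ st' : St, closure st'.1.1 ⊆ st.1.1 ∧
      ∀ s ∈ st'.1.1, ∀ x ∈ st'.1.2, ∀ s' ∈ st'.1.1, ∀ x' ∈ st'.1.2,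
        |G s x - G s' x'| ≤ 1 / (n + 1) := by
    rintro n ⟨⟨U, W⟩, hUo, hUne, hWo, hx₀W⟩
    obtain ⟨U', W', hU'o, hU'ne, hU'sub, hW'o, hx₀W', hosc⟩ :=
      osc_claim G hG1 hG2 hGrange Φ hΦ1 hΦ2 i j hij x₀ U hUo hUne (1 / (n + 1))
        (by positivity)
    obtain ⟨t, ht⟩ := hU'ne
    obtain ⟨C, hCnhds, hCclosed, hCsub⟩ := exists_mem_nhds_isClosed_subset (hU'o.mem_nhds ht)
    refine ⟨⟨(interior C, W'), isOpen_interior,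
      ⟨t, mem_interior_iff_mem_nhds.mpr hCnhds⟩, hW'o, hx₀W'⟩, ?_, ?_⟩
    · exact ((closure_minimal interior_subset hCclosed).trans hCsub).trans hU'sub
    · intro a ha b hb a' ha' b' hb'
      exact hosc a (hCsub (interior_subset ha)) b hb a' (hCsub (interior_subset ha')) b' hb'
  choose stf hstf1 hstf2 using step
  let seq : ℕ → St := fun n =>
    Nat.rec (motive := fun _ => St)
      ⟨(U₀, Set.univ), hU₀o, hU₀ne, isOpen_univ, Set.mem_univ x₀⟩
      (fun n st => stf n st) n
  have hseq : ∀ n, seq (n + 1) = stf n (seq n) := fun n => rfl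
  have hcl : ∀ n, closure (seq (n + 1)).1.1 ⊆ (seq n).1.1 := fun n => hstf1 n (seq n)
  have hosc : ∀ n, ∀ a ∈ (seq (n + 1)).1.1, ∀ b ∈ (seq (n + 1)).1.2,
      ∀ a' ∈ (seq (n + 1)).1.1, ∀ b' ∈ (seq (n + 1)).1.2,
      |G a b - G a' b'| ≤ 1 / (n + 1) := fun n => hstf2 n (seq n)
  obtain ⟨d, hd⟩ := hS.iInter_closure_nonempty (fun n => (seq (n + 1)).1.1)
    (fun n => (seq (n + 1)).2.1) (fun n => (seq (n + 1)).2.2.1)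
    (fun n => subset_closure.trans (hcl (n + 1)))
  have hdmem : ∀ n, d ∈ (seq n).1.1 := fun n => hcl n (Set.mem_iInter.mp hd n)
  refine ⟨d, hdmem 0, ?_⟩
  rw [ContinuousAt, Metric.tendsto_nhds]
  intro ε hε
  obtain ⟨n, hn⟩ := exists_nat_one_div_lt hε
  have hbox : (seq (n + 1)).1.1 ×ˢ (seq (n + 1)).1.2 ∈ 𝓝 (d, x₀) :=
    ((seq (n + 1)).2.1.prod (seq (n + 1)).2.2.2.1).mem_nhds
      ⟨hdmem (n + 1), (seq (n + 1)).2.2.2.2⟩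
  filter_upwards [hbox] with q hq
  rw [Real.dist_eq]
  calc |G q.1 q.2 - G d x₀| ≤ 1 / (n + 1) :=
        hosc n q.1 hq.1 q.2 hq.2 d (hdmem (n + 1)) x₀ (seq (n + 1)).2.2.2.2
    _ < ε := hn

theorem lawson_identity_continuity_of_stoneCech_extension
    {S X : Type*} [Monoid S] [TopologicalSpace S] [TopologicalSpace X]
    [T35Space S] [T35Space X]
    (hS_right : ∀ s : S, Continuous fun t : S => s * t)
    (hS : IsPseudocompact S) (hX : IsPseudocompact X)
    (π : S × X → X)
    (haction : ∀ (s t : S) (x : X), π (s * t, x) = π (s, π (t, x)))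
    (hone : ∀ x : X, π (1, x) = x)
    (hsep : SeparatelyContinuous π)
    (πext : StoneCech S × StoneCech X → StoneCech X)
    (hext_sep : SeparatelyContinuous πext)
    (hext : ∀ (s : S) (x : X),
      πext (stoneCechUnit s, stoneCechUnit x) = stoneCechUnit (π (s, x))) :
    ∀ x : X, ContinuousAt π (1, x) := by
  intro x₀
  by_contra hnc
  -- extract an open neighborhood V of x₀ witnessing the failure of continuity
  have hnt : ¬ Tendsto π (𝓝 ((1 : S), x₀)) (𝓝 x₀) := by
    intro h
    exact hnc (by rw [ContinuousAt, hone x₀]; exact h)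
  rw [Filter.tendsto_def] at hnt
  push_neg at hnt
  obtain ⟨V₀, hV₀, hV₀n⟩ := hnt
  obtain ⟨V, hVsub, hVo, hx₀V⟩ := mem_nhds_iff.mp hV₀
  have hVn : π ⁻¹' V ∉ 𝓝 ((1 : S), x₀) := fun h =>
    hV₀n (Filter.mem_of_superset h (Set.preimage_mono hVsub))
  -- Urysohn-type function on X separating x₀ from the complement of V
  obtain ⟨f, hfc, hfx₀, hfV⟩ := CompletelyRegularSpace.completely_regular x₀ Vᶜ
    hVo.isClosed_compl (by simp [hx₀V])
  set h' : X → ℝ := fun w => 1 - (f w : ℝ) with hh'def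
  have hh'c : Continuous h' := continuous_const.sub (continuous_subtype_val.comp hfc)
  set fβ : StoneCech X → unitInterval := stoneCechExtend hfc with hfβdef
  set h : StoneCech X → ℝ := fun y => 1 - (fβ y : ℝ) with hhdef
  have hhc : Continuous h :=
    continuous_const.sub (continuous_subtype_val.comp (continuous_stoneCechExtend hfc))
  have hhunit : ∀ w : X, h (stoneCechUnit w) = h' w := by
    intro w
    have : fβ (stoneCechUnit w) = f w := congrFun (stoneCechExtend_extends hfc) w
    simp [hhdef, hh'def, this]
  -- the two-variable functions
  set G : S → X → ℝ := fun s x => h' (π (s, x)) with hGdef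
  set Φ : StoneCech S → StoneCech X → ℝ := fun q y => h (πext (q, y)) with hΦdef
  have hG1 : ∀ s, Continuous (G s) := fun s => hh'c.comp (hsep.1 s)
  have hG2 : ∀ x, Continuous fun s => G s x := fun x => hh'c.comp (hsep.2 x)
  have hGrange : ∀ s x, G s x ∈ Set.Icc (0 : ℝ) 1 := by
    intro s x
    constructor
    · have := unitInterval.le_one (f (π (s, x))); simp [hGdef, hh'def]; linarith
    · have := unitInterval.nonneg (f (π (s, x))); simp [hGdef, hh'def]; linarith
  have hΦ1 : ∀ q, Continuous (Φ q) := fun q => hhc.comp (hext_sep.1 q)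
  have hΦ2 : ∀ y, Continuous fun q => Φ q y := fun y => hhc.comp (hext_sep.2 y)
  have hij : ∀ s x, Φ (stoneCechUnit s) (stoneCechUnit x) = G s x := by
    intro s x
    simp [hΦdef, hGdef, hext s x, hhunit]
  -- πext (ι 1, ·) is the identity on the Stone–Čech compactification of X
  have hid : ∀ y : StoneCech X, πext (stoneCechUnit 1, y) = y := by
    have hc : Continuous fun y : StoneCech X => πext (stoneCechUnit (1 : S), y) :=
      hext_sep.1 _
    have heq : (fun y : StoneCech X => πext (stoneCechUnit (1 : S), y)) = id := by
      refine Continuous.ext_on denseRange_stoneCechUnit hc continuous_id ?_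
      rintro _ ⟨w, rfl⟩
      simp [hext 1 w, hone w]
    intro y
    exact congrFun heq y
  -- the ultrafilter of failure
  have hne : ((𝓝 ((1 : S), x₀)) ⊓ 𝓟 {q : S × X | π q ∉ V}).NeBot := by
    rw [Filter.inf_principal_neBot_iff]
    intro U hU
    by_contra hcon
    rw [Set.not_nonempty_iff_eq_empty] at hcon
    apply hVn
    refine Filter.mem_of_superset hU ?_
    intro q hq
    by_contra hqV
    have : q ∈ U ∩ {q : S × X | π q ∉ V} := ⟨hq, hqV⟩
    rw [hcon] at this
    exact this
  haveI := hne
  let 𝔘 : Ultrafilter (S × X) := Ultrafilter.of ((𝓝 ((1 : S), x₀)) ⊓ 𝓟 {q : S × X | π q ∉ V})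
  have h𝔘 : (𝔘 : Filter (S × X)) ≤ (𝓝 ((1 : S), x₀)) ⊓ 𝓟 {q : S × X | π q ∉ V} :=
    Ultrafilter.of_le _
  have h𝔘nhds : (𝔘 : Filter (S × X)) ≤ 𝓝 ((1 : S), x₀) := h𝔘.trans inf_le_left
  have hbadmem : {q : S × X | π q ∉ V} ∈ (𝔘 : Filter (S × X)) :=
    le_principal_iff.mp (h𝔘.trans inf_le_right)
  -- the limit point z of the images of π along the ultrafilter
  obtain ⟨z, -, hz⟩ := isCompact_univ.ultrafilter_le_nhds
    (𝔘.map fun q : S × X => stoneCechUnit (π q)) (by rw [le_principal_iff]; exact univ_mem)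
  rw [Ultrafilter.coe_map] at hz
  have hz' : Tendsto (fun q : S × X => stoneCechUnit (π q)) (𝔘 : Filter (S × X)) (𝓝 z) := hz
  have hz0 : h z = 0 := by
    have h1 : Tendsto (fun q : S × X => h (stoneCechUnit (π q))) (𝔘 : Filter (S × X))
        (𝓝 (h z)) := (hhc.tendsto z).comp hz'
    have h2 : (fun q : S × X => h (stoneCechUnit (π q))) =ᶠ[(𝔘 : Filter (S × X))]
        fun _ => (0 : ℝ) := by
      filter_upwards [hbadmem] with q hq
      have hfq : f (π q) = 1 := hfV hq
      simp [hhunit, hh'def, hfq]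
    exact tendsto_nhds_unique (h1.congr' h2) tendsto_const_nhds
  -- for a dense set of d near 1 we get the key identity
  have hkey : ∀ N ∈ 𝓝 (1 : S), ∃ d ∈ N, h (πext (stoneCechUnit d, z)) - G d x₀ = 0 := by
    intro N hN
    obtain ⟨U₀, hU₀sub, hU₀o, h1U₀⟩ := mem_nhds_iff.mp hN
    obtain ⟨d, hdU₀, hdc⟩ := dense_joint_continuity hS G hG1 hG2 hGrange Φ hΦ1 hΦ2
      stoneCechUnit stoneCechUnit hij x₀ U₀ hU₀o ⟨1, h1U₀⟩
    refine ⟨d, hU₀sub hdU₀, ?_⟩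
    have hmc : Continuous fun q : S × X => ((d * q.1 : S), q.2) :=
      ((hS_right d).comp continuous_fst).prodMk continuous_snd
    have hm : Tendsto (fun q : S × X => ((d * q.1 : S), q.2)) (𝔘 : Filter (S × X))
        (𝓝 (d, x₀)) := by
      have := (hmc.tendsto ((1 : S), x₀)).mono_left h𝔘nhds
      simpa [mul_one] using this
    have T1 : Tendsto (fun q : S × X => G (d * q.1) q.2) (𝔘 : Filter (S × X))
        (𝓝 (G d x₀)) := by
      have h0 : Tendsto ((fun r : S × X => G r.1 r.2) ∘ fun q : S × X => ((d * q.1 : S), q.2))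
          (𝔘 : Filter (S × X)) (𝓝 (G d x₀)) := Filter.Tendsto.comp (by exact hdc) hm
      exact h0
    have T2 : Tendsto (fun q : S × X => h (πext (stoneCechUnit d, stoneCechUnit (π q))))
        (𝔘 : Filter (S × X)) (𝓝 (h (πext (stoneCechUnit d, z)))) :=
      ((hhc.comp (hext_sep.1 (stoneCechUnit d))).tendsto z).comp hz'
    have hpt : ∀ q : S × X, h (πext (stoneCechUnit d, stoneCechUnit (π q))) =
        G (d * q.1) q.2 := by
      rintro ⟨a, b⟩
      rw [hext d (π (a, b)), hhunit, ← haction d a b]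
    have T2' : Tendsto (fun q : S × X => G (d * q.1) q.2) (𝔘 : Filter (S × X))
        (𝓝 (h (πext (stoneCechUnit d, z)))) := T2.congr hpt
    have := tendsto_nhds_unique T2' T1
    rw [this]
    ring
  -- conclude by continuity of the defect function
  set φ : S → ℝ := fun d => h (πext (stoneCechUnit d, z)) - G d x₀ with hφdef
  have hφc : Continuous φ := by
    refine Continuous.sub ?_ (hG2 x₀)
    exact hhc.comp ((hext_sep.2 z).comp continuous_stoneCechUnit)
  have h1cl : (1 : S) ∈ closure {d : S | φ d = 0} := by
    rw [mem_closure_iff_nhds]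
    intro N hN
    obtain ⟨d, hdN, hd0⟩ := hkey N hN
    exact ⟨d, hdN, hd0⟩
  have hzero : φ 1 = 0 :=
    (isClosed_eq hφc continuous_const).closure_subset h1cl
  have hG1x₀ : G 1 x₀ = 1 := by
    simp [hGdef, hone x₀, hh'def, hfx₀]
  rw [hφdef] at hzero
  simp only at hzero
  rw [hid z, hz0, hG1x₀] at hzero
  norm_num at hzero
end

section
/- Every regular q_D-space is a weak q_D-space. More precisely, if X is a regular topological space that is a q_D-space with dense witness set D, then every subset of D that is not closed in X has a weak q-point relative to it (so X is a weak q_D-space with the same dense set D). -/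
open Filter Topology Set

theorem regular_qD_space_is_weak_qD_space
    {X : Type*} [TopologicalSpace X] [RegularSpace X] (D : Set X) (hD : Dense D)
    (hqd : ∀ x : X, ∃ U : ℕ → Set X, (∀ i : ℕ, IsOpen (U i) ∧ x ∈ U i) ∧
      ∀ d : ℕ → X, (∀ i : ℕ, d i ∈ U i ∩ D) → ∃ c : X, MapClusterPt c Filter.atTop d) :
    ∀ A : Set X, A ⊆ D → ¬ IsClosed A → ∃ x : X, IsWeakQPoint x A := by
  intro A hAD hAnc
  -- find a point in the closure of A but not in A
  obtain ⟨x, hxcl, hxA⟩ : ∃ x, x ∈ closure A ∧ x ∉ A := by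
    by_contra h
    push_neg at h
    exact hAnc (isClosed_of_closure_subset fun y hy => h y hy)
  obtain ⟨U, hU, hUcl⟩ := hqd x
  -- construct a shrinking function via regularity
  have shrink : ∀ V : Set X, ∃ W : Set X, IsOpen W ∧ x ∈ W ∧
      (IsOpen V → x ∈ V → closure W ⊆ V) := by
    intro V
    by_cases hV : IsOpen V ∧ x ∈ V
    · obtain ⟨t, htn, htc, hts⟩ :=
        exists_mem_nhds_isClosed_subset (hV.1.mem_nhds hV.2)
      refine ⟨interior t, isOpen_interior, mem_interior_iff_mem_nhds.2 htn, ?_⟩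
      intro _ _
      calc closure (interior t) ⊆ closure t := closure_mono interior_subset
        _ = t := htc.closure_eq
        _ ⊆ V := hts
    · exact ⟨Set.univ, isOpen_univ, Set.mem_univ x, fun h1 h2 => absurd ⟨h1, h2⟩ hV⟩
  choose sh shOpen shMem shCl using shrink
  -- finite intersections of shrunk sets
  set W : List (Set X) → Set X := fun l => l.foldr (fun V acc => sh V ∩ acc) Set.univ with hW
  have hWopen : ∀ l, IsOpen (W l) := by
    intro l; induction l with
    | nil => exact isOpen_univ
    | cons a l ih => exact (shOpen a).inter ih
  have hWmem : ∀ l, x ∈ W l := by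
    intro l; induction l with
    | nil => exact Set.mem_univ x
    | cons a l ih => exact ⟨shMem a, ih⟩
  have hWsub : ∀ l, ∀ V ∈ l, W l ⊆ sh V := by
    intro l; induction l with
    | nil => intro V hV; cases hV
    | cons a l ih =>
      intro V hV
      rcases List.mem_cons.1 hV with h | h
      · subst h; exact Set.inter_subset_left
      · exact Set.inter_subset_right.trans (ih V h)
  -- pick a point of A in each relevant open set
  have hpt : ∀ l : List (Set X), ∃ p, p ∈ A ∧ p ∈ U (l.length - 1) ∧ p ∈ W l := by
    intro l
    have hopen : IsOpen (U (l.length - 1) ∩ W l) := (hU _).1.inter (hWopen l)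
    have hmem : x ∈ U (l.length - 1) ∩ W l := ⟨(hU _).2, hWmem l⟩
    obtain ⟨p, hp1, hp2⟩ := mem_closure_iff.1 hxcl _ hopen hmem
    exact ⟨p, hp2, hp1.1, hp1.2⟩
  choose p hpA hpU hpW using hpt
  refine ⟨x, fun l => {p l}, ?_, ?_⟩
  · intro l _
    exact ⟨Set.singleton_subset_iff.2 (hpA l),
      {p l}, Set.countable_singleton _, subset_closure⟩
  · intro V hV
    set L : ℕ → List (Set X) := fun i => (List.range (i + 1)).map V with hL
    have hLlen : ∀ i, (L i).length = i + 1 := by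
      intro i; simp [hL]
    set d : ℕ → X := fun i => p (L i) with hd
    have hdU : ∀ i, d i ∈ U i ∩ D := by
      intro i
      have := hpU (L i)
      rw [hLlen i] at this
      exact ⟨by simpa using this, hAD (hpA (L i))⟩
    obtain ⟨c, hc⟩ := hUcl d hdU
    have hcfreq : ∀ s ∈ 𝓝 c, ∃ᶠ n in Filter.atTop, d n ∈ s :=
      fun s hs => mapClusterPt_iff_frequently.1 hc s hs
    refine ⟨c, ?_, ?_⟩
    · -- c ∈ closure of the union
      rw [mem_closure_iff]
      intro O hO hcO
      obtain ⟨n, hn⟩ := (hcfreq O (hO.mem_nhds hcO)).exists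
      exact ⟨d n, hn, Set.mem_iUnion.2 ⟨n, rfl⟩⟩
    · -- c ∈ ⋂ V i
      rw [Set.mem_iInter]
      intro i
      have hsub : closure (sh (V i)) ⊆ V i := shCl (V i) (hV i).1 (hV i).2
      apply hsub
      rw [mem_closure_iff]
      intro O hO hcO
      have hfreq : ∃ᶠ n in Filter.atTop, d n ∈ O := hcfreq O (hO.mem_nhds hcO)
      obtain ⟨n, hni, hnO⟩ := (hfreq.and_eventually (Filter.eventually_ge_atTop i)).exists
      refine ⟨d n, hni, ?_⟩
      apply hWsub (L n) (V i) ?_ (hpW (L n))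
      exact List.mem_map.2 ⟨i, List.mem_range.2 (Nat.lt_succ_of_le hnO), rfl⟩
end

section
/- Let X be a weak q_D-space and A a regular closed subset of X. Then A, with the subspace topology, is a weak q_D-space. -/
open Filter Topology Set

theorem regularClosed_subset_of_weak_qD_space_is_weak_qD
    {X : Type*} [TopologicalSpace X] (hX : IsWeakQDSpace X)
    (A : Set X) (hA : closure (interior A) = A) :
    IsWeakQDSpace A := by
  classical
  obtain ⟨D, hD, hDp⟩ := hX
  have hAclosed : IsClosed A := hA ▸ isClosed_closure
  -- choice of open extensions
  set e : Set A → Set X := fun V =>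
    if h : ∃ W : Set X, IsOpen W ∧ (Subtype.val ⁻¹' W : Set A) = V then h.choose else ∅ with he
  have he_spec : ∀ V : Set A, IsOpen V →
      IsOpen (e V) ∧ (Subtype.val ⁻¹' (e V) : Set A) = V := by
    intro V hV
    rw [isOpen_induced_iff] at hV
    obtain ⟨W, hW, hWV⟩ := hV
    have h : ∃ W : Set X, IsOpen W ∧ (Subtype.val ⁻¹' W : Set A) = V := ⟨W, hW, hWV⟩
    simp only [he, dif_pos h]
    exact ⟨h.choose_spec.1, h.choose_spec.2⟩
  refine ⟨Subtype.val ⁻¹' (D ∩ interior A), ?_, ?_⟩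
  · -- density
    intro a
    rw [closure_subtype]
    have himg : (Subtype.val '' (Subtype.val ⁻¹' (D ∩ interior A) : Set A)) = D ∩ interior A := by
      rw [Subtype.image_preimage_coe]
      exact Set.inter_eq_right.mpr fun z hz => interior_subset hz.2
    rw [himg]
    have h1 : (a : X) ∈ closure (interior A) := by rw [hA]; exact a.2
    have h2 : closure (interior A) ⊆ closure (D ∩ interior A) := by
      rw [Set.inter_comm]
      calc closure (interior A) ⊆ closure (closure (interior A ∩ D)) :=
            closure_mono (hD.open_subset_closure_inter isOpen_interior)
        _ = closure (interior A ∩ D) := closure_closure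
    exact h2 h1
  · intro B hBsub hBnc
    set B' : Set X := Subtype.val '' B with hB'
    have hB'sub : B' ⊆ D ∩ interior A := by
      rintro _ ⟨b, hb, rfl⟩; exact hBsub hb
    have hB'A : B' ⊆ A := fun z hz => interior_subset (hB'sub hz).2
    have hB'nc : ¬ IsClosed B' := by
      intro h
      apply hBnc
      have : B = (Subtype.val ⁻¹' B' : Set A) :=
        (Subtype.val_injective.preimage_image B).symm
      rw [this]
      exact h.preimage continuous_subtype_val
    obtain ⟨x, φ, hφ1, hφ2⟩ := hDp B' (fun b hb => (hB'sub hb).1) hB'nc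
    -- values of φ on good lists land in B'
    have hgood : ∀ l : List (Set X), (∀ U ∈ l, IsOpen U ∧ x ∈ U) → φ l ⊆ B' :=
      fun l hl => (hφ1 l hl).1
    have key : ∀ U : ℕ → Set X, (∀ i, IsOpen (U i) ∧ x ∈ U i) →
        (⋃ i : ℕ, φ ((List.range (i + 1)).map U)) ⊆ B' := by
      intro U hU
      apply Set.iUnion_subset
      intro i
      apply hgood
      intro V hV
      obtain ⟨j, _, rfl⟩ := List.mem_map.mp hV
      exact hU j
    -- x ∈ A
    have hxA : x ∈ A := by
      rw [← hAclosed.closure_eq, mem_closure_iff]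
      intro N hN hxN
      obtain ⟨y, hy1, _⟩ := hφ2 (fun _ => N) (fun _ => ⟨hN, hxN⟩)
      have hyA : y ∈ A := by
        have := key (fun _ => N) (fun _ => ⟨hN, hxN⟩)
        exact hAclosed.closure_subset (closure_mono (this.trans hB'A) hy1)
      have hyN : y ∈ N := Set.mem_iInter.mp ‹y ∈ ⋂ i : ℕ, (fun _ => N) i› 0
      exact ⟨y, hyN, hyA⟩
    refine ⟨⟨x, hxA⟩, fun l : List (Set A) => (Subtype.val ⁻¹' (φ (l.map e)) : Set A), ?_, ?_⟩
    · -- condition (1)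
      intro l hl
      have hle : ∀ W ∈ l.map e, IsOpen W ∧ x ∈ W := by
        intro W hW
        obtain ⟨V, hVl, rfl⟩ := List.mem_map.mp hW
        obtain ⟨hVopen, hxV⟩ := hl V hVl
        obtain ⟨h1, h2⟩ := he_spec V hVopen
        exact ⟨h1, by rw [← h2] at hxV; exact hxV⟩
      obtain ⟨hsub, T, hTc, hTcl⟩ := hφ1 (l.map e) hle
      constructor
      · intro s hs
        have : (s : X) ∈ B' := hsub hs
        obtain ⟨b, hb, hbe⟩ := this
        exact Subtype.val_injective hbe ▸ hb
      · refine ⟨Subtype.val ⁻¹' (T ∩ interior A), hTc.mono Set.inter_subset_left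
          |>.preimage Subtype.val_injective, ?_⟩
        intro s hs
        rw [closure_subtype]
        have h1 : Subtype.val '' (Subtype.val ⁻¹' (T ∩ interior A) : Set A)
            = T ∩ interior A := by
          rw [Subtype.image_preimage_coe]
          exact Set.inter_eq_right.mpr fun z hz => interior_subset hz.2
        rw [h1]
        -- s.val ∈ closure (T ∩ interior A)
        have hsB' : (s : X) ∈ B' := hsub hs
        have hsint : (s : X) ∈ interior A := (hB'sub hsB').2
        have hsT : (s : X) ∈ closure T := hTcl hs
        rw [mem_closure_iff] at hsT ⊢
        intro O hO hsO
        obtain ⟨z, hz1, hz2⟩ := hsT (O ∩ interior A) (hO.inter isOpen_interior)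
          ⟨hsO, hsint⟩
        exact ⟨z, hz1.1, hz2, hz1.2⟩
    · -- condition (2)
      intro U hU
      set W : ℕ → Set X := fun i => e (U i) with hWdef
      have hW : ∀ i, IsOpen (W i) ∧ x ∈ W i := by
        intro i
        obtain ⟨h1, h2⟩ := he_spec (U i) (hU i).1
        refine ⟨h1, ?_⟩
        have := (hU i).2
        rw [← h2] at this
        exact this
      obtain ⟨y, hy1, hy2⟩ := hφ2 W hW
      have hsubB' := key W hW
      have hyA : y ∈ A := hAclosed.closure_subset (closure_mono (hsubB'.trans hB'A) hy1)
      refine ⟨⟨y, hyA⟩, ?_, ?_⟩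
      · -- closure part
        rw [closure_subtype]
        refine closure_mono ?_ hy1
        intro z hz
        obtain ⟨i, hzi⟩ := Set.mem_iUnion.mp hz
        have hzA : z ∈ A := hB'A (hsubB' (Set.mem_iUnion.mpr ⟨i, hzi⟩))
        refine ⟨⟨z, hzA⟩, ?_, rfl⟩
        apply Set.mem_iUnion.mpr ⟨i, ?_⟩
        show (⟨z, hzA⟩ : A) ∈ Subtype.val ⁻¹' (φ (((List.range (i + 1)).map U).map e))
        have : ((List.range (i + 1)).map U).map e = (List.range (i + 1)).map W := by
          rw [List.map_map]; rfl
        rw [this]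
        exact hzi
      · rw [Set.mem_iInter]
        intro i
        have h2 := (he_spec (U i) (hU i).1).2
        have : y ∈ W i := Set.mem_iInter.mp hy2 i
        rw [← h2]
        exact this
end

section
/- Let X be a Tychonoff space, F a subset of C_p(X) that is bounded in C_p(X), and f : X → ℝ a function belonging to the closure of F in ℝ^X with the product topology. Then for every separable subspace Y ⊆ X the restriction f|_Y is continuous. -/
open Filter Topology Set

theorem restriction_continuous_of_bounded_closure
    {X : Type*} [TopologicalSpace X] [T35Space X]
    (F : Set (Cp X))
    (hF : ∀ Φ : Cp X → ℝ, Continuous Φ → ∃ M : ℝ, ∀ g ∈ F, |Φ g| ≤ M)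
    (f : X → ℝ) (hf : f ∈ closure (Subtype.val '' F : Set (X → ℝ)))
    (Y : Set X) (hY : ∃ c : Set X, c ⊆ Y ∧ c.Countable ∧ Y ⊆ closure c) :
    ContinuousOn f Y := by
  obtain ⟨c, hcY, hcc, hYc⟩ := hY
  -- Key claim: for every countable Q there is a continuous function agreeing with f on Q.
  have claim : ∀ Q : Set X, Q.Countable → ∃ g : X → ℝ, Continuous g ∧ ∀ x ∈ Q, g x = f x := by
    intro Q hQ
    haveI : Countable Q := hQ.to_subtype
    by_contra hno
    push_neg at hno
    letI : MetricSpace (Q → ℝ) := TopologicalSpace.metrizableSpaceMetric _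
    set ρ : (X → ℝ) → (Q → ℝ) := fun h q => h q with hρdef
    have hρc : Continuous ρ := continuous_pi fun q => continuous_apply (q : X)
    have hL : ρ f ∈ closure (ρ '' (Subtype.val '' F)) :=
      image_closure_subset_closure_image hρc ⟨f, hf, rfl⟩
    have hne : ∀ g : Cp X, ρ g.1 ≠ ρ f := by
      intro g hEq
      obtain ⟨x, hxQ, hx⟩ := hno g.1 g.2
      exact hx (congrFun hEq ⟨x, hxQ⟩)
    set Φ : Cp X → ℝ := fun g => (dist (ρ g.1) (ρ f))⁻¹ with hΦdef
    have hΦc : Continuous Φ := by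
      have h1 : Continuous fun g : Cp X => dist (ρ g.1) (ρ f) :=
        (hρc.comp continuous_subtype_val).dist continuous_const
      exact h1.inv₀ fun g => by
        simpa [dist_eq_zero] using hne g
    obtain ⟨M, hM⟩ := hF Φ hΦc
    have hε : (0:ℝ) < (max M 0 + 1)⁻¹ := by positivity
    obtain ⟨b, hb, hdist⟩ := Metric.mem_closure_iff.mp hL _ hε
    obtain ⟨g0, hg0F, rfl⟩ : ∃ g0 ∈ F, ρ g0.1 = b := by
      obtain ⟨h, hh, rfl⟩ := hb
      obtain ⟨g0, hg0, rfl⟩ := hh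
      exact ⟨g0, hg0, rfl⟩
    have hpos : 0 < dist (ρ g0.1) (ρ f) := by
      simpa [dist_pos] using hne g0
    have h2 : max M 0 + 1 < Φ g0 := by
      rw [hΦdef]
      have hlt : dist (ρ g0.1) (ρ f) < (max M 0 + 1)⁻¹ := by
        rwa [dist_comm] at hdist
      calc max M 0 + 1 = ((max M 0 + 1)⁻¹)⁻¹ := by rw [inv_inv]
        _ < (dist (ρ g0.1) (ρ f))⁻¹ := inv_strictAnti₀ hpos hlt
    have h3 := hM g0 hg0F
    have h4 : Φ g0 ≤ |Φ g0| := le_abs_self _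
    have : max M 0 + 1 ≤ max M 0 :=
      le_trans (le_of_lt h2) (le_trans h4 (le_trans h3 (le_max_left _ _)))
    linarith
  -- Now conclude.
  obtain ⟨g, hg, hgc⟩ := claim c hcc
  have hEq : EqOn f g Y := by
    intro y hy
    obtain ⟨gy, hgy, hgyc⟩ := claim (insert y c) (hcc.insert y)
    have h1 : EqOn gy g c := fun x hx => by
      rw [hgyc x (Set.mem_insert_of_mem y hx), hgc x hx]
    have h2 : EqOn gy g (closure c) := h1.closure hgy hg
    have h3 : gy y = g y := h2 (hYc hy)
    rw [← h3, hgyc y (Set.mem_insert y c)]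
  exact (hg.continuousOn).congr hEq
end

section
/- Let X be a Tychonoff semitopological inf-semilattice (the meet operation (x, y) ↦ x ⊓ y is separately continuous) that is locally convex with respect to its natural order. Suppose that for every x ∈ X the lower cone ↓x = {y ∈ X : y ≤ x} is pseudocompact and the meet operation restricted to ↓x × ↓x is quasicontinuous. Then the meet operation is jointly continuous at every point (x, x) of the diagonal of X × X. -/
open Filter Topology Set

theorem semilattice_diagonal_continuity
    {X : Type*} [SemilatticeInf X] [TopologicalSpace X] [T35Space X]
    (hsep : SeparatelyContinuous fun p : X × X => p.1 ⊓ p.2)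
    (hlc : ∀ (x : X) (U : Set X), IsOpen U → x ∈ U →
      ∃ V : Set X, IsOpen V ∧ x ∈ V ∧ V ⊆ U ∧ V.OrdConnected)
    (hpc : ∀ x : X, IsPseudocompact (Set.Iic x))
    (hqc : ∀ x : X, QuasiContinuous fun p : Set.Iic x × Set.Iic x => (p.1 : X) ⊓ (p.2 : X)) :
    ∀ x : X, ContinuousAt (fun p : X × X => p.1 ⊓ p.2) (x, x) := by
  intro x
  rw [ContinuousAt]
  have hxx : (x, x).1 ⊓ (x, x).2 = x := inf_idem x
  rw [hxx, Filter.tendsto_def]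
  intro U hU
  rw [mem_nhds_iff] at hU
  obtain ⟨U', hU'U, hU'open, hxU'⟩ := hU
  obtain ⟨V, hVopen, hxV, hVU, hVconv⟩ := hlc x U' hU'open hxU'
  -- apply quasicontinuity of the meet on (↓x) × (↓x) at the point (x, x)
  set xt : Set.Iic x := ⟨x, le_refl x⟩ with hxt
  have hcoe : Continuous (fun a : Set.Iic x => (a : X)) := continuous_subtype_val
  have hU0open : IsOpen {p : Set.Iic x × Set.Iic x | (p.1 : X) ∈ V ∧ (p.2 : X) ∈ V} := by
    have h1 : IsOpen {p : Set.Iic x × Set.Iic x | (p.1 : X) ∈ V} :=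
      (hVopen.preimage hcoe).preimage continuous_fst
    have h2 : IsOpen {p : Set.Iic x × Set.Iic x | (p.2 : X) ∈ V} :=
      (hVopen.preimage hcoe).preimage continuous_snd
    exact h1.inter h2
  obtain ⟨W, hWopen, hWne, hWsub, hWim⟩ :=
    hqc x (xt, xt) V hVopen (by simpa using hxV) _ hU0open ⟨hxV, hxV⟩
  obtain ⟨⟨u, v⟩, huv⟩ := hWne
  obtain ⟨A, B, hAopen, hBopen, huA, hvB, hABW⟩ := isOpen_prod_iff.mp hWopen u v huv
  have hmeet : ∀ a ∈ A, ∀ b ∈ B, (a : X) ⊓ (b : X) ∈ V := by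
    intro a ha b hb
    exact hWim ⟨(a, b), hABW (Set.mk_mem_prod ha hb), rfl⟩
  -- the maps y ↦ u ⊓ y and z ↦ v ⊓ z into ↓x
  have hφcont : Continuous (fun y : X => (⟨(u : X) ⊓ y, inf_le_left.trans u.2⟩ : Set.Iic x)) :=
    Continuous.subtype_mk (hsep.1 (u : X)) _
  have hψcont : Continuous (fun z : X => (⟨(v : X) ⊓ z, inf_le_left.trans v.2⟩ : Set.Iic x)) :=
    Continuous.subtype_mk (hsep.1 (v : X)) _
  set Oy : Set X := (fun y : X => (⟨(u : X) ⊓ y, inf_le_left.trans u.2⟩ : Set.Iic x)) ⁻¹' A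
    with hOy
  set Oz : Set X := (fun z : X => (⟨(v : X) ⊓ z, inf_le_left.trans v.2⟩ : Set.Iic x)) ⁻¹' B
    with hOz
  have hOyopen : IsOpen Oy := hAopen.preimage hφcont
  have hOzopen : IsOpen Oz := hBopen.preimage hψcont
  have hxOy : x ∈ Oy := by
    have : (⟨(u : X) ⊓ x, inf_le_left.trans u.2⟩ : Set.Iic x) = u :=
      Subtype.ext (inf_eq_left.mpr u.2)
    simp only [hOy, Set.mem_preimage, this]
    exact huA
  have hxOz : x ∈ Oz := by
    have : (⟨(v : X) ⊓ x, inf_le_left.trans v.2⟩ : Set.Iic x) = v :=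
      Subtype.ext (inf_eq_left.mpr v.2)
    simp only [hOz, Set.mem_preimage, this]
    exact hvB
  -- the neighborhood (Oy ∩ V) × Oz of (x, x) works
  have hmem : (Oy ∩ V) ×ˢ Oz ∈ 𝓝 (x, x) :=
    prod_mem_nhds ((hOyopen.inter hVopen).mem_nhds ⟨hxOy, hxV⟩) (hOzopen.mem_nhds hxOz)
  refine Filter.mem_of_superset hmem ?_
  rintro ⟨y, z⟩ ⟨⟨hyOy, hyV⟩, hzOz⟩
  have hc : ((u : X) ⊓ y) ⊓ ((v : X) ⊓ z) ∈ V := by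
    exact hmeet _ hyOy _ hzOz
  have hle1 : ((u : X) ⊓ y) ⊓ ((v : X) ⊓ z) ≤ y ⊓ z :=
    le_inf (inf_le_left.trans inf_le_right) (inf_le_right.trans inf_le_right)
  have hle2 : y ⊓ z ≤ y := inf_le_left
  have : y ⊓ z ∈ V := hVconv.out hc hyV ⟨hle1, hle2⟩
  exact hU'U (hVU this)
end

section
/- Let X and Y be Tychonoff spaces such that (X, X) is a Grothendieck pair, and let f : X → Y be a continuous surjection. Then (Y, Y) is a Grothendieck pair. -/
open Filter Topology Set

/-
If `q` is a pointwise limit of functions `F a` but is discontinuous at `y₀`, a diagonal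
construction produces indices `aₙ` and points `yₙ` with `q(yₙ)` far from `q(y₀)`, every
`F aₙ` close to `q` at all earlier points, and every `F aₘ` barely moving between `y₀` and
all later points. Lifting along `f`, the Grothendieck property of `(X, X)` yields a continuous
cluster point `ρ` of the functions `F aₙ ∘ f` on `X`, and pseudocompactness of `X` produces a
point where `ρ` has to be simultaneously close to and far from `ρ(x₀)`. So the pointwise
closure of `F(Y)` consists of continuous functions. It is compact because it is pointwise
bounded: `Y` is pseudocompact as a continuous image of `X`, and each `a ↦ F a y` is continuous.
-/

open Function

section Pseudocompact

variable {X Y : Type*} [TopologicalSpace X] [TopologicalSpace Y]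

theorem IsPseudocompact.of_surjective (hX : IsPseudocompact X) {f : X → Y} (hf : Continuous f)
    (hsurj : Surjective f) : IsPseudocompact Y := fun g hg => by
  obtain ⟨M, hM⟩ := hX (g ∘ f) (hg.comp hf)
  exact ⟨M, hsurj.forall.2 hM⟩

theorem exists_continuous_nonneg_eq_one_support_subset [CompletelyRegularSpace X] {V : Set X}
    (hV : IsOpen V) {p : X} (hp : p ∈ V) :
    ∃ g : X → ℝ, Continuous g ∧ g p = 1 ∧ (∀ x, 0 ≤ g x) ∧ support g ⊆ V := by
  obtain ⟨φ, hφc, hφp, hφV⟩ := CompletelyRegularSpace.completely_regular_isOpen p V hV hp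
  refine ⟨fun x => 1 - φ x, continuous_const.sub (continuous_subtype_val.comp hφc),
    by simp [hφp], fun x => sub_nonneg.2 (φ x).2.2, fun x hx => ?_⟩
  by_contra hxV
  exact hx (by simp [hφV hxV])

/-- If the closures of a decreasing sequence of nonempty open sets had empty intersection,
then `∑ n • gₙ`, with `gₙ` a bump at a point of `Vₙ`, would be an unbounded continuous function. -/
theorem IsPseudocompact.nonempty_iInter_closure [CompletelyRegularSpace X]
    (hX : IsPseudocompact X) {V : ℕ → Set X} (hV : ∀ n, IsOpen (V n)) (hne : ∀ n, (V n).Nonempty)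
    (hanti : Antitone V) : (⋂ n, closure (V n)).Nonempty := by
  by_contra hempty
  rw [not_nonempty_iff_eq_empty, iInter_eq_empty_iff] at hempty
  choose p hp using hne
  choose g hgc hgp hg0 hgV using
    fun n => exists_continuous_nonneg_eq_one_support_subset (hV n) (hp n)
  have hlf : LocallyFinite fun n : ℕ => support fun x => (n : ℝ) * g n x := by
    intro x
    obtain ⟨N, hN⟩ := hempty x
    refine ⟨(closure (V N))ᶜ, isClosed_closure.isOpen_compl.mem_nhds hN, (finite_Iio N).subset ?_⟩
    rintro n ⟨z, hzn, hzN⟩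
    exact mem_Iio.2 <| lt_of_not_ge fun hNn =>
      hzN (subset_closure (hanti hNn (hgV n (support_mul_subset_right _ _ hzn))))
  have hsum : Continuous fun x => ∑ᶠ n : ℕ, (n : ℝ) * g n x :=
    continuous_finsum (fun n => continuous_const.mul (hgc n)) hlf
  obtain ⟨M, hM⟩ := hX _ hsum
  obtain ⟨n, hn⟩ := exists_nat_gt M
  have hle : (n : ℝ) ≤ ∑ᶠ m : ℕ, (m : ℝ) * g m (p n) := by
    simpa [hgp] using single_le_finsum n (hlf.point_finite (p n))
      fun m => mul_nonneg m.cast_nonneg (hg0 m _)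
  linarith [hM (p n), le_abs_self (∑ᶠ m : ℕ, (m : ℝ) * g m (p n))]

theorem IsPseudocompact.exists_mem_closure_forall_mem_closure [CompletelyRegularSpace X]
    (hX : IsPseudocompact X) {B : Set X} {A : ℕ → Set X} (hB : IsOpen B)
    (hA : ∀ i, IsOpen (A i)) {x : ℕ → X} (hxB : ∀ n, x n ∈ B)
    (hxA : ∀ i n, i < n → x n ∈ A i) : ∃ z ∈ closure B, ∀ i, z ∈ closure (A i) := by
  obtain ⟨z, hz⟩ := hX.nonempty_iInter_closure (V := fun n => B ∩ ⋂ i ∈ Finset.range n, A i)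
    (fun n => hB.inter (isOpen_biInter_finset fun i _ => hA i))
    (fun n => ⟨x n, hxB n, mem_iInter₂.2 fun i hi => hxA i n (Finset.mem_range.1 hi)⟩)
    (fun m n hmn => inter_subset_inter_right _
      (biInter_subset_biInter_left (Finset.coe_subset.2 (Finset.range_mono hmn))))
  rw [mem_iInter] at hz
  exact ⟨z, closure_mono inter_subset_left (hz 0), fun i => closure_mono
    (inter_subset_right.trans (biInter_subset_of_mem (Finset.mem_range.2 i.lt_succ_self)))
    (hz (i + 1))⟩

theorem MapClusterPt.le_of_eventually_le {α β : Type*} [TopologicalSpace β] {b : β}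
    {l : Filter α} {u : α → β} (h : MapClusterPt b l u) {Φ : β → ℝ} (hΦ : Continuous Φ)
    {r : ℝ} (hr : ∀ᶠ i in l, Φ (u i) ≤ r) : Φ b ≤ r :=
  (isClosed_le hΦ continuous_const).mem_of_mapClusterPt h hr

/-- `ρ` is far from `ρ x₀` near every `xₙ`, and `hₘ` is close to `hₘ x₀` near every later `xₙ`;
pseudocompactness gives a point in the closures of all these open sets, where the cluster point
`ρ` of the `hₘ` is then close to `ρ x₀` as well. -/
theorem IsPseudocompact.le_four_mul_of_mapClusterPt [CompletelyRegularSpace X]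
    (hX : IsPseudocompact X) {h : ℕ → X → ℝ} (hh : ∀ m, Continuous (h m)) {ρ : X → ℝ}
    (hρc : Continuous ρ) (hρ : MapClusterPt ρ atTop h) {x : ℕ → X} {x₀ : X} {c : ℕ → ℝ}
    {c₀ ε δ : ℝ} (hδ : 0 < δ) (hc : ∀ n, ε ≤ dist (c n) c₀) (hx₀ : ∀ n, dist (h n x₀) c₀ < δ)
    (hxc : ∀ m n, m < n → dist (h n (x m)) (c m) < δ)
    (hxh : ∀ m n, m < n → dist (h m (x n)) (h m x₀) < δ) : ε ≤ 4 * δ := by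
  have hρx₀ : dist (ρ x₀) c₀ ≤ δ := hρ.le_of_eventually_le
    ((continuous_apply x₀).dist continuous_const) (Eventually.of_forall fun n => (hx₀ n).le)
  have hρx : ∀ n, dist (ρ (x n)) (c n) ≤ δ := fun n => hρ.le_of_eventually_le
    ((continuous_apply (x n)).dist continuous_const)
    ((eventually_gt_atTop n).mono fun m hm => (hxc n m hm).le)
  have hfar : ∀ n, ε - 3 * δ < dist (ρ (x n)) (ρ x₀) := fun n => by
    linarith [hc n, hρx n, dist_triangle4 (c n) (ρ (x n)) (ρ x₀) c₀, dist_comm (c n) (ρ (x n))]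
  obtain ⟨z, hzfar, hznear⟩ := hX.exists_mem_closure_forall_mem_closure
    (isOpen_lt continuous_const (hρc.dist continuous_const))
    (fun m => isOpen_lt ((hh m).dist continuous_const) continuous_const) hfar hxh
  have hρz : ε - 3 * δ ≤ dist (ρ z) (ρ x₀) :=
    closure_lt_subset_le continuous_const (hρc.dist continuous_const) hzfar
  have hhz : ∀ m, dist (h m z) (h m x₀) ≤ δ := fun m =>
    closure_lt_subset_le ((hh m).dist continuous_const) continuous_const (hznear m)
  have : dist (ρ z) (ρ x₀) ≤ δ := hρ.le_of_eventually_le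
    ((continuous_apply z).dist (continuous_apply x₀)) (Eventually.of_forall hhz)
  linarith

end Pseudocompact

section PointwiseClosure

variable {ι Y E : Type*} [PseudoMetricSpace E]

theorem exists_forall_dist_lt_of_mem_closure_range {g : ι → Y → E} {q : Y → E}
    (hq : q ∈ closure (range g)) (s : Finset Y) {δ : ℝ} (hδ : 0 < δ) :
    ∃ a, ∀ y ∈ s, dist (g a y) (q y) < δ := by
  obtain ⟨_, hmem, a, rfl⟩ := mem_closure_iff.1 hq _
    (isOpen_set_pi s.finite_toSet fun y _ => Metric.isOpen_ball) fun y _ => Metric.mem_ball_self hδ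
  exact ⟨a, hmem⟩

variable [TopologicalSpace Y]

/-- At each stage the new index is chosen before the new point, so that it approximates `q` at
all earlier points while all earlier indices are controlled at the new point. -/
theorem exists_diagonal_seq_of_mem_closure_range {g : ι → Y → E} (hg : ∀ a, Continuous (g a))
    {q : Y → E} (hq : q ∈ closure (range g)) {y₀ : Y} {ε δ : ℝ} (hδ : 0 < δ)
    (hfreq : ∃ᶠ y in 𝓝 y₀, ε ≤ dist (q y) (q y₀)) :
    ∃ (a : ℕ → ι) (y : ℕ → Y),
      (∀ n, dist (g (a n) y₀) (q y₀) < δ ∧ ε ≤ dist (q (y n)) (q y₀)) ∧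
      ∀ m n, m < n → dist (g (a n) (y m)) (q (y m)) < δ ∧
        dist (g (a m) (y n)) (g (a m) y₀) < δ := by
  classical
  obtain ⟨s, hsP, hsr⟩ := exists_seq_of_forall_finset_exists
    (fun p : ι × Y => dist (g p.1 y₀) (q y₀) < δ ∧ ε ≤ dist (q p.2) (q y₀))
    (fun p p' => dist (g p'.1 p.2) (q p.2) < δ ∧ dist (g p.1 p'.2) (g p.1 y₀) < δ)
    fun t _ => by
      obtain ⟨a, ha⟩ := exists_forall_dist_lt_of_mem_closure_range hq
        (insert y₀ (t.image Prod.snd)) hδ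
      have hnear : ∀ᶠ y in 𝓝 y₀, ∀ p ∈ t, dist (g p.1 y) (g p.1 y₀) < δ :=
        (eventually_all_finset t).2 fun p _ => Metric.tendsto_nhds.1 (hg p.1).continuousAt δ hδ
      obtain ⟨y, hy, hyt⟩ := (hfreq.and_eventually hnear).exists
      exact ⟨(a, y), ⟨ha y₀ (Finset.mem_insert_self _ _), hy⟩, fun p hp =>
        ⟨ha p.2 (Finset.mem_insert_of_mem (Finset.mem_image_of_mem _ hp)), hyt p hp⟩⟩
  exact ⟨fun n => (s n).1, fun n => (s n).2, hsP, hsr⟩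

theorem Cp.isCompact_closure_range {F : ι → Cp Y}
    (hbdd : ∀ y, ∃ M, ∀ a, |(F a).1 y| ≤ M)
    (hcont : ∀ q ∈ closure (range fun a => (F a).1), Continuous q) :
    IsCompact (closure (range F)) := by
  choose M hM using hbdd
  have hind : Topology.IsInducing fun g : Cp Y => g.1 := ⟨rfl⟩
  rw [hind.closure_eq_preimage_closure_image, ← range_comp]
  have hbox : IsCompact (univ.pi fun y => Icc (-M y) (M y)) :=
    isCompact_univ_pi fun _ => isCompact_Icc
  refine hind.isCompact_preimage' (hbox.of_isClosed_subset
    isClosed_closure (closure_minimal ?_ (isClosed_set_pi fun y _ => isClosed_Icc)))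
    fun q hq => ⟨⟨q, hcont q hq⟩, rfl⟩
  rintro _ ⟨a, rfl⟩ y -
  exact abs_le.1 (hM y a)

end PointwiseClosure

section GrothendieckPair

variable {X Y : Type*} [TopologicalSpace X] [TopologicalSpace Y]

theorem GrothendieckPair.isPseudocompact [Nonempty Y] (h : GrothendieckPair X Y) :
    IsPseudocompact X := by
  intro φ hφ
  obtain ⟨y⟩ := ‹Nonempty Y›
  set F : X → Cp Y := fun x => ⟨fun _ => φ x, continuous_const⟩
  have hF : Continuous F := (continuous_pi fun _ => hφ).subtype_mk _
  obtain ⟨M, hM⟩ := isBounded_iff_forall_norm_le.1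
    ((h F hF).image ((continuous_apply y).comp continuous_subtype_val)).isBounded
  exact ⟨M, fun x => hM _ ⟨F x, subset_closure (mem_range_self x), rfl⟩⟩

theorem GrothendieckPair.exists_mapClusterPt_comp (hX : GrothendieckPair X X) {f : X → Y}
    (hf : Continuous f) (hsurj : Surjective f) {F : Y → Cp Y} (hF : Continuous F) (a : ℕ → Y) :
    ∃ ρ : X → ℝ, Continuous ρ ∧ MapClusterPt ρ atTop fun n => (F (a n)).1 ∘ f := by
  set G : X → Cp X := fun v => ⟨(F (f v)).1 ∘ f, (F (f v)).2.comp hf⟩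
  have hG : Continuous G := (continuous_pi fun w =>
    (continuous_apply (f w)).comp ((continuous_subtype_val.comp hF).comp hf)).subtype_mk _
  obtain ⟨ρ, -, hρ⟩ := (hX G hG).exists_mapClusterPt_of_frequently (l := atTop)
    (f := fun n => G (surjInv hsurj (a n)))
    (Frequently.of_forall fun n => subset_closure (mem_range_self _))
  refine ⟨ρ.1, ρ.2, ?_⟩
  simpa [G, Function.comp_def, surjInv_eq hsurj] using
    hρ.continuousAt_comp continuous_subtype_val.continuousAt

theorem GrothendieckPair.continuous_of_mem_closure_range [CompletelyRegularSpace X]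
    (hX : GrothendieckPair X X) (hXp : IsPseudocompact X) {f : X → Y} (hf : Continuous f)
    (hsurj : Surjective f) {F : Y → Cp Y} (hF : Continuous F) {q : Y → ℝ}
    (hq : q ∈ closure (range fun a => (F a).1)) : Continuous q := by
  refine continuous_iff_continuousAt.2 fun y₀ => by_contra fun hq₀ => ?_
  obtain ⟨ε, hε, hfreq⟩ : ∃ ε > 0, ∃ᶠ y in 𝓝 y₀, ε ≤ dist (q y) (q y₀) := by
    simpa [ContinuousAt, Metric.tendsto_nhds] using hq₀
  obtain ⟨a, y, hay, hdiag⟩ :=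
    exists_diagonal_seq_of_mem_closure_range (fun a => (F a).2) hq (δ := ε / 5) (by positivity)
      hfreq
  obtain ⟨ρ, hρc, hρ⟩ := hX.exists_mapClusterPt_comp hf hsurj hF a
  have hlift := surjInv_eq hsurj
  have := hXp.le_four_mul_of_mapClusterPt (fun n => (F (a n)).2.comp hf) hρc hρ
    (δ := ε / 5) (x := fun n => surjInv hsurj (y n)) (x₀ := surjInv hsurj y₀)
    (c := fun n => q (y n))
    (by positivity) (fun n => (hay n).2) (fun n => by simpa [hlift] using (hay n).1)
    (fun m n hmn => by simpa [hlift] using (hdiag m n hmn).1)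
    (fun m n hmn => by simpa [hlift] using (hdiag m n hmn).2)
  linarith

end GrothendieckPair

theorem grothendieck_pair_of_continuous_surjection_general
    {X Y : Type*} [TopologicalSpace X] [TopologicalSpace Y] [T35Space X]
    (hX : GrothendieckPair X X)
    (f : X → Y) (hf : Continuous f) (hsurj : Function.Surjective f) :
    GrothendieckPair Y Y := by
  intro F hF
  have hXp : IsPseudocompact X := by
    rcases isEmpty_or_nonempty X with _ | _
    · exact fun _ _ => ⟨0, isEmptyElim⟩
    · exact hX.isPseudocompact
  have hYp := hXp.of_surjective hf hsurj
  exact Cp.isCompact_closure_range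
    (fun y => hYp _ ((continuous_apply y).comp (continuous_subtype_val.comp hF)))
    fun q hq => hX.continuous_of_mem_closure_range hXp hf hsurj hF hq

theorem grothendieck_pair_of_continuous_surjection
    {X Y : Type*} [TopologicalSpace X] [TopologicalSpace Y] [T35Space X] [T35Space Y]
    (hX : GrothendieckPair X X)
    (f : X → Y) (hf : Continuous f) (hsurj : Function.Surjective f) :
    GrothendieckPair Y Y :=
  grothendieck_pair_of_continuous_surjection_general hX f hf hsurj
end
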